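/- arXiv:2302.07587 — 11 statements merged into one kernel-verified Lean document; each statement's English description precedes it below -/
import Mathlib

section
/- (Lemma: the Busemann–Hausdorff volume is Euclidean rigid; concrete form.) Let m ≥ 1 and let ‖·‖ be a norm on ℝ^m such that ‖x‖ ≥ |x| for every x ∈ ℝ^m, where |·| is the standard Euclidean norm. If the Lebesgue measure of the closed unit ball {x ∈ ℝ^m : ‖x‖ ≤ 1} is at least the Lebesgue measure of the Euclidean closed unit ball {x ∈ ℝ^m : |x| ≤ 1}, then ‖x‖ = |x| for all x ∈ ℝ^m. -/
open MeasureTheory Set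

/-!
Since `‖·‖ ≤ N`, the unit ball of `N` lies inside the Euclidean unit ball; the volume hypothesis
forces the difference to be null. A seminorm on a finite-dimensional space is continuous, so
the open set `{‖z‖ < 1 < N z}` inside that difference is empty. Hence `N ≤ 1` on the open
Euclidean unit ball, and homogeneity gives `N ≤ ‖·‖`.
-/

theorem le_of_lt_of_measure_sublevel_le {X : Type*} [TopologicalSpace X] [MeasurableSpace X]
    [OpensMeasurableSpace X] {μ : Measure X} [μ.IsOpenPosMeasure] {f g : X → ℝ} {c : ℝ}
    (hf : Continuous f) (hg : Continuous g) (hfg : ∀ x, f x ≤ g x)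
    (hfin : μ {x | g x ≤ c} ≠ ⊤) (hμ : μ {x | f x ≤ c} ≤ μ {x | g x ≤ c})
    {x : X} (hx : f x < c) : g x ≤ c := by
  by_contra! hgx
  have hsub : {y | g y ≤ c} ⊆ {y | f y ≤ c} := fun y hy => (hfg y).trans hy
  have hnull : μ ({y | f y ≤ c} \ {y | g y ≤ c}) = 0 := by
    rw [measure_sdiff hsub (isClosed_le hg continuous_const).measurableSet.nullMeasurableSet hfin]
    exact tsub_eq_zero_of_le hμ
  have hopen : IsOpen ({y | f y < c} ∩ {y | c < g y}) :=
    (isOpen_lt hf continuous_const).inter (isOpen_lt continuous_const hg)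
  have hgap : {y | f y < c} ∩ {y | c < g y} ⊆ {y | f y ≤ c} \ {y | g y ≤ c} := by
    intro y hy
    simp only [mem_inter_iff, mem_sdiff, mem_ofPred_eq, not_le] at hy ⊢
    exact ⟨hy.1.le, hy.2⟩
  have hempty : {y | f y < c} ∩ {y | c < g y} = ∅ :=
    (hopen.measure_eq_zero_iff μ).1 (measure_mono_null hgap hnull)
  exact hempty.subset (show x ∈ {y | f y < c} ∩ {y | c < g y} from ⟨hx, hgx⟩)

theorem Seminorm.continuous_of_finiteDimensional {E : Type*} [NormedAddCommGroup E]
    [NormedSpace ℝ E] [FiniteDimensional ℝ E] (p : Seminorm ℝ E) : Continuous p :=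
  continuousOn_univ.1 (p.convexOn.continuousOn isOpen_univ)

theorem Seminorm.le_norm_of_forall_norm_lt_one {E : Type*} [SeminormedAddCommGroup E]
    [NormedSpace ℝ E] (p : Seminorm ℝ E) (h : ∀ z, ‖z‖ < 1 → p z ≤ 1) (x : E) : p x ≤ ‖x‖ := by
  refine le_of_forall_gt_imp_ge_of_dense fun t ht => ?_
  have ht0 : 0 < t := (norm_nonneg x).trans_lt ht
  have hscaled : ‖t⁻¹ • x‖ < 1 := by
    rw [norm_smul, Real.norm_of_nonneg (inv_nonneg.2 ht0.le), inv_mul_lt_one₀ ht0]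
    exact ht
  have hp := h _ hscaled
  rwa [map_smul_eq_mul, Real.norm_of_nonneg (inv_nonneg.2 ht0.le), inv_mul_le_one₀ ht0] at hp

theorem busemann_hausdorff_euclidean_rigid_general
    (m : ℕ) (N : EuclideanSpace ℝ (Fin m) → ℝ)
    (N_add : ∀ x y, N (x + y) ≤ N x + N y)
    (N_smul : ∀ (c : ℝ) (x), N (c • x) = |c| * N x)
    (hge : ∀ x, ‖x‖ ≤ N x)
    (hvol : volume {x : EuclideanSpace ℝ (Fin m) | ‖x‖ ≤ 1}
        ≤ volume {x : EuclideanSpace ℝ (Fin m) | N x ≤ 1}) :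
    ∀ x, N x = ‖x‖ := by
  let p : Seminorm ℝ (EuclideanSpace ℝ (Fin m)) := Seminorm.of N N_add N_smul
  have hfin : volume {x : EuclideanSpace ℝ (Fin m) | N x ≤ 1} ≠ ⊤ := by
    refine ne_top_of_le_ne_top (measure_closedBall_lt_top (x := 0) (r := 1)).ne
      (measure_mono fun z hz => ?_)
    simpa using (hge z).trans hz
  have hball : ∀ z, ‖z‖ < 1 → N z ≤ 1 := fun z hz =>
    le_of_lt_of_measure_sublevel_le continuous_norm p.continuous_of_finiteDimensional hge hfin
      hvol hz
  exact fun x => le_antisymm (p.le_norm_of_forall_norm_lt_one hball x) (hge x)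

/-- The Busemann–Hausdorff volume is Euclidean rigid (concrete form): if a norm `N`
on `ℝ^m` dominates the Euclidean norm pointwise but its closed unit ball has Lebesgue
measure at least that of the Euclidean closed unit ball, then `N` equals the
Euclidean norm. -/
theorem busemann_hausdorff_euclidean_rigid
    (m : ℕ) (hm : 1 ≤ m) (N : EuclideanSpace ℝ (Fin m) → ℝ)
    (N_add : ∀ x y, N (x + y) ≤ N x + N y)
    (N_smul : ∀ (c : ℝ) (x), N (c • x) = |c| * N x)
    (N_eq_zero : ∀ x, N x = 0 → x = 0)
    (hge : ∀ x, ‖x‖ ≤ N x)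
    (hvol : volume {x : EuclideanSpace ℝ (Fin m) | ‖x‖ ≤ 1}
        ≤ volume {x : EuclideanSpace ℝ (Fin m) | N x ≤ 1}) :
    ∀ x, N x = ‖x‖ :=
  busemann_hausdorff_euclidean_rigid_general m N N_add N_smul hge hvol
end

section
/- (Lemma: the Gromov-mass-star volume is Euclidean rigid; concrete form.) Let m ≥ 1 and let ‖·‖ be a norm on ℝ^m with ‖x‖ ≥ |x| for every x ∈ ℝ^m, where |·| is the standard Euclidean norm. Assume that for every invertible linear map A : ℝ^m → ℝ^m such that the closed unit ball {x : ‖x‖ ≤ 1} is contained in the parallelepiped A({x ∈ ℝ^m : |x_i| ≤ 1 for all i}), one has |det A| ≥ 1. Then ‖x‖ = |x| for all x ∈ ℝ^m. -/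
/-!
If `N x > |x|` for some `x`, the `N`-unit ball `K` misses a point of the Euclidean unit sphere, so
Hahn–Banach gives a Euclidean unit vector `w` and `t < 1` with `|⟪w, y⟫| ≤ t` on `K` (as `K` is
symmetric). Since also `K` lies in the Euclidean unit ball, `K` fits in the box of half-width `t`
along `w` and `1` along the rest of an orthonormal basis through `w`: a parallelepiped of
determinant `t < 1`.
-/

open scoped RealInnerProductSpace

theorem OrthonormalBasis.exists_apply_eq_of_norm_eq_one {𝕜 E ι : Type*} [RCLike 𝕜]
    [NormedAddCommGroup E] [InnerProductSpace 𝕜 E] [FiniteDimensional 𝕜 E] [Fintype ι]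
    (card_ι : Module.finrank 𝕜 E = Fintype.card ι) {w : E} (hw : ‖w‖ = 1) :
    ∃ (b : OrthonormalBasis ι 𝕜 E) (i : ι), b i = w := by
  have : Nonempty ι := by
    rw [← Fintype.card_pos_iff, ← card_ι, Module.finrank_pos_iff_exists_ne_zero]
    exact ⟨w, norm_ne_zero_iff.1 (hw ▸ one_ne_zero)⟩
  obtain ⟨i⟩ := this
  have hv : Orthonormal 𝕜 (({i} : Set ι).domRestrict fun _ => w) :=
    orthonormal_subsingleton_iff.2 fun _ => hw
  obtain ⟨b, hb⟩ := hv.exists_orthonormalBasis_extension_of_card_eq card_ι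
  exact ⟨b, i, hb i rfl⟩

theorem Seminorm.exists_abs_inner_le_of_norm_lt {E : Type*} [NormedAddCommGroup E]
    [InnerProductSpace ℝ E] [FiniteDimensional ℝ E] (p : Seminorm ℝ E) {z : E} (hz : ‖z‖ < p z) :
    ∃ w : E, ‖w‖ = 1 ∧ ∃ t ∈ Set.Ioo (0 : ℝ) 1, ∀ y, p y ≤ 1 → |⟪w, y⟫| ≤ t := by
  have hz₀ : 0 < ‖z‖ := norm_pos_iff.2 fun h => by simp [h] at hz
  set z₁ := ‖z‖⁻¹ • z
  have hz₁ : ‖z₁‖ = 1 := by simp [z₁, norm_smul, hz₀.ne']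
  have hpz₁ : z₁ ∉ p.closedBall 0 1 := by
    rw [mem_closedBall_zero, not_le, map_smul_eq_mul, norm_inv, norm_norm, ← div_eq_inv_mul,
      one_lt_div hz₀]
    exact hz
  have hp : Continuous p := continuousOn_univ.1 (p.convexOn.continuousOn isOpen_univ)
  obtain ⟨f, s, hf, hfz⟩ := geometric_hahn_banach_closed_point (p.convex_closedBall 0 1)
    (by simpa only [closedBall_zero_eq] using isClosed_le hp continuous_const) hpz₁
  set u := (InnerProductSpace.toDual ℝ E).symm f
  have hu : ∀ y, ⟪u, y⟫ = f y := fun y => InnerProductSpace.toDual_symm_apply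
  have hs : 0 < s := by simpa using hf 0 (p.mem_closedBall_self zero_le_one)
  have hsu : s < ‖u‖ := hfz.trans_le <| by
    simpa [hu, hz₁] using real_inner_le_norm u z₁
  have hu₀ : 0 < ‖u‖ := hs.trans hsu
  refine ⟨‖u‖⁻¹ • u, by simp [norm_smul, hu₀.ne'], s / ‖u‖,
    ⟨div_pos hs hu₀, (div_lt_one hu₀).2 hsu⟩, fun y hy => ?_⟩
  have hfy : |f y| ≤ s := by
    have hy' : y ∈ p.closedBall 0 1 := p.mem_closedBall_zero.2 hy
    have hfy' := hf (-y) (p.neg_mem_closedBall_zero.2 hy')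
    rw [map_neg] at hfy'
    exact abs_le.2 ⟨by linarith, (hf y hy').le⟩
  rw [real_inner_smul_left, hu, abs_mul, abs_inv, abs_norm, div_eq_inv_mul]
  exact mul_le_mul_of_nonneg_left hfy (by positivity)

namespace OrthonormalBasis

variable {ι : Type*} [Fintype ι] [DecidableEq ι]

/-- Maps the cube `{x | ∀ i, |x i| ≤ 1}` onto the box of half-width `|c i|` along each `b i`. -/
noncomputable def parallelepipedMap (b : OrthonormalBasis ι ℝ (EuclideanSpace ℝ ι)) (c : ι → ℝ) :
    EuclideanSpace ℝ ι →ₗ[ℝ] EuclideanSpace ℝ ι :=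
  b.repr.symm.toLinearMap ∘ₗ Matrix.toEuclideanLin (Matrix.diagonal c)

variable (b : OrthonormalBasis ι ℝ (EuclideanSpace ℝ ι)) (c : ι → ℝ)

theorem repr_parallelepipedMap_apply (x : EuclideanSpace ℝ ι) (i : ι) :
    b.repr (b.parallelepipedMap c x) i = c i * x i := by
  simp [parallelepipedMap, Matrix.toLpLin_apply, Matrix.mulVec_diagonal]

theorem abs_det_parallelepipedMap :
    |LinearMap.det (b.parallelepipedMap c)| = |∏ i, c i| := by
  have hb : |LinearMap.det b.repr.symm.toLinearMap| = 1 := by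
    rw [← LinearMap.normDet_eq_abs_det]
    exact b.repr.symm.toLinearIsometry.normDet_eq_one
  rw [parallelepipedMap, LinearMap.det_comp, abs_mul, hb, one_mul,
    Matrix.toEuclideanLin_eq_toLin_orthonormal, LinearMap.det_toLin, Matrix.det_diagonal]

theorem mem_parallelepipedMap_image_cube (hc : ∀ i, c i ≠ 0) {y : EuclideanSpace ℝ ι}
    (hy : ∀ i, |⟪b i, y⟫| ≤ |c i|) :
    y ∈ b.parallelepipedMap c '' {x | ∀ i, |x i| ≤ 1} := by
  refine ⟨WithLp.toLp 2 fun i => (c i)⁻¹ * ⟪b i, y⟫, fun i => ?_, b.repr.injective ?_⟩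
  · simpa [abs_mul, inv_mul_le_one₀ (abs_pos.2 (hc i))] using hy i
  · ext i
    rw [repr_parallelepipedMap_apply, b.repr_apply_apply]
    field_simp [hc i]

end OrthonormalBasis

theorem gromov_mass_star_euclidean_rigid_general
    (m : ℕ) (N : EuclideanSpace ℝ (Fin m) → ℝ)
    (N_add : ∀ x y, N (x + y) ≤ N x + N y)
    (N_smul : ∀ (c : ℝ) (x), N (c • x) = |c| * N x)
    (hge : ∀ x, ‖x‖ ≤ N x)
    (hpar : ∀ A : EuclideanSpace ℝ (Fin m) ≃ₗ[ℝ] EuclideanSpace ℝ (Fin m),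
        {x | N x ≤ 1} ⊆ A '' {x : EuclideanSpace ℝ (Fin m) | ∀ i, |x i| ≤ 1} →
          1 ≤ |LinearMap.det (A : EuclideanSpace ℝ (Fin m) →ₗ[ℝ] EuclideanSpace ℝ (Fin m))|) :
    ∀ x, N x = ‖x‖ := by
  let p : Seminorm ℝ (EuclideanSpace ℝ (Fin m)) := Seminorm.of N N_add N_smul
  intro x
  refine le_antisymm (not_lt.1 fun hx => ?_) (hge x)
  obtain ⟨w, hw, t, ⟨ht₀, ht₁⟩, hslab⟩ := p.exists_abs_inner_le_of_norm_lt hx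
  obtain ⟨b, i₀, rfl⟩ := OrthonormalBasis.exists_apply_eq_of_norm_eq_one finrank_euclideanSpace hw
  let c : Fin m → ℝ := Pi.mulSingle i₀ t
  have hc : ∀ i, c i ≠ 0 := fun i => by
    by_cases hi : i = i₀ <;> simp [c, hi, ht₀.ne']
  have hdet : |LinearMap.det (b.parallelepipedMap c)| = t := by
    simp [c, b.abs_det_parallelepipedMap, Finset.prod_pi_mulSingle', ht₀.le]
  let A := LinearMap.equivOfDetNeZero (b.parallelepipedMap c) (abs_ne_zero.1 (hdet ▸ ht₀.ne'))
  have hball : {x | N x ≤ 1} ⊆ A '' {x | ∀ i, |x i| ≤ 1} := by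
    refine fun y hy => b.mem_parallelepipedMap_image_cube c hc fun i => ?_
    rcases eq_or_ne i i₀ with rfl | hi
    · simpa [c, abs_of_pos ht₀] using hslab y hy
    · have hy₁ : ‖y‖ ≤ 1 := (hge y).trans hy
      simpa [c, hi] using (abs_real_inner_le_norm (b i) y).trans (by simpa using hy₁)
  have hA : 1 ≤ |LinearMap.det (b.parallelepipedMap c)| := hpar A hball
  linarith

/-- The Gromov-mass-star volume is Euclidean rigid (concrete form): if a norm `N`
on `ℝ^m` dominates the Euclidean norm pointwise and every parallelepiped
`A '' {x | ∀ i, |x i| ≤ 1}` (for `A` an invertible linear map) containing the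
`N`-unit ball satisfies `|det A| ≥ 1`, then `N` equals the Euclidean norm. -/
theorem gromov_mass_star_euclidean_rigid
    (m : ℕ) (hm : 1 ≤ m) (N : EuclideanSpace ℝ (Fin m) → ℝ)
    (N_add : ∀ x y, N (x + y) ≤ N x + N y)
    (N_smul : ∀ (c : ℝ) (x), N (c • x) = |c| * N x)
    (N_eq_zero : ∀ x, N x = 0 → x = 0)
    (hge : ∀ x, ‖x‖ ≤ N x)
    (hpar : ∀ A : EuclideanSpace ℝ (Fin m) ≃ₗ[ℝ] EuclideanSpace ℝ (Fin m),
        {x | N x ≤ 1} ⊆ A '' {x : EuclideanSpace ℝ (Fin m) | ∀ i, |x i| ≤ 1} →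
          1 ≤ |LinearMap.det (A : EuclideanSpace ℝ (Fin m) →ₗ[ℝ] EuclideanSpace ℝ (Fin m))|) :
    ∀ x, N x = ‖x‖ :=
  gromov_mass_star_euclidean_rigid_general m N N_add N_smul hge hpar
end

section
/- (Normalization of the Gromov-mass-star volume on Euclidean space.) Let m ≥ 1 and let A : ℝ^m → ℝ^m be an invertible linear map such that the Euclidean closed unit ball {x ∈ ℝ^m : |x| ≤ 1} is contained in the parallelepiped A({x ∈ ℝ^m : |x_i| ≤ 1 for all i}). Then |det A| ≥ 1. Consequently a parallelepiped of minimal Lebesgue measure containing the Euclidean unit ball has Lebesgue measure exactly 2^m, attained by the cube {x : |x_i| ≤ 1 for all i}. -/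
/-!
If `A` maps the cube onto a set containing the unit ball, then `A⁻¹` maps the unit ball into the
cube: every coordinate functional `x ↦ (A⁻¹ x) i = ⟪(A⁻¹)† eᵢ, x⟫` has norm at most `1`, i.e. every
row `(A⁻¹)† eᵢ` of `A⁻¹` is a vector of length at most `1`. Hadamard's inequality then gives
`|det A⁻¹| ≤ 1`. The volume statements follow from `vol (A '' C) = |det A| · vol C` and
`vol C = 2 ^ m` for the cube `C`.
-/

open MeasureTheory ENNReal

open Module LinearMap

open scoped RealInnerProductSpace

section

variable {E : Type*} [NormedAddCommGroup E] [InnerProductSpace ℝ E]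

theorem norm_le_of_forall_abs_inner_le {y : E} {C : ℝ} (hC : 0 ≤ C)
    (h : ∀ x : E, ‖x‖ ≤ 1 → |⟪y, x⟫| ≤ C) : ‖y‖ ≤ C := by
  rw [← innerSL_apply_norm ℝ y]
  exact ContinuousLinearMap.opNorm_le_of_unit_norm hC fun x hx => h x hx.le

theorem OrthonormalBasis.abs_det_le_prod_norm {ι : Type*} [Fintype ι] [DecidableEq ι]
    (b : OrthonormalBasis ι ℝ E) (v : ι → E) : |b.toBasis.det v| ≤ ∏ i, ‖v i‖ := by
  let e := Fintype.equivFin ι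
  let b' := b.reindex e
  have : Fact (finrank ℝ E = Fintype.card ι) := ⟨finrank_eq_card_basis b.toBasis⟩
  have h := b'.toBasis.orientation.abs_volumeForm_apply_le (v ∘ e.symm)
  rw [b'.toBasis.orientation.volumeForm_robust' b', OrthonormalBasis.reindex_toBasis,
    Basis.det_reindex, Function.comp_assoc, e.symm_comp_self, Function.comp_id] at h
  rwa [← e.symm.prod_comp fun i => ‖v i‖]

variable [FiniteDimensional ℝ E]

theorem LinearMap.det_adjoint (f : E →ₗ[ℝ] E) : (adjoint f).det = f.det := by
  let b := stdOrthonormalBasis ℝ E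
  rw [← det_toMatrix b.toBasis, toMatrix_adjoint, Matrix.det_conjTranspose, star_trivial,
    det_toMatrix]

theorem LinearMap.abs_det_le_prod_norm_adjoint_apply {ι : Type*} [Fintype ι] [DecidableEq ι]
    (b : OrthonormalBasis ι ℝ E) (f : E →ₗ[ℝ] E) : |f.det| ≤ ∏ i, ‖adjoint f (b i)‖ := by
  have : f.det = b.toBasis.det (adjoint f ∘ b.toBasis) := by
    rw [Basis.det_comp, Basis.det_self, mul_one, det_adjoint]
  rw [this]
  exact b.abs_det_le_prod_norm _

end

section

variable {ι : Type*} [Fintype ι] [DecidableEq ι]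

theorem LinearMap.abs_det_le_one_of_mapsTo_closedBall_cube
    (f : EuclideanSpace ℝ ι →ₗ[ℝ] EuclideanSpace ℝ ι)
    (hf : ∀ x, ‖x‖ ≤ 1 → ∀ i, |f x i| ≤ 1) : |f.det| ≤ 1 := by
  have hrow (i : ι) : ‖adjoint f (EuclideanSpace.basisFun ι ℝ i)‖ ≤ 1 :=
    norm_le_of_forall_abs_inner_le zero_le_one fun x hx => by
      rw [adjoint_inner_left, EuclideanSpace.basisFun_inner]
      exact hf x hx i
  calc |f.det| ≤ ∏ i, ‖adjoint f (EuclideanSpace.basisFun ι ℝ i)‖ :=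
        abs_det_le_prod_norm_adjoint_apply _ f
    _ ≤ 1 := Finset.prod_le_one (fun _ _ => norm_nonneg _) fun i _ => hrow i

theorem one_le_abs_det_of_closedBall_subset_image_cube
    (A : EuclideanSpace ℝ ι ≃ₗ[ℝ] EuclideanSpace ℝ ι)
    (hA : Metric.closedBall 0 1 ⊆ A '' {x | ∀ i, |x i| ≤ 1}) :
    1 ≤ |(A : EuclideanSpace ℝ ι →ₗ[ℝ] EuclideanSpace ℝ ι).det| := by
  have hsymm : |(A.symm : EuclideanSpace ℝ ι →ₗ[ℝ] EuclideanSpace ℝ ι).det| ≤ 1 := by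
    refine abs_det_le_one_of_mapsTo_closedBall_cube _ fun x hx => ?_
    obtain ⟨y, hy, rfl⟩ := hA (mem_closedBall_zero_iff.2 hx)
    simpa using hy
  rwa [LinearEquiv.det_coe_symm, abs_inv,
    inv_le_one₀ (abs_pos.2 (LinearEquiv.isUnit_det' A).ne_zero)] at hsymm

end

section

variable {ι : Type*} [Fintype ι]

theorem EuclideanSpace.closedBall_zero_one_subset_cube :
    Metric.closedBall (0 : EuclideanSpace ℝ ι) 1 ⊆ {x | ∀ i, |x i| ≤ 1} :=
  fun x hx i => (PiLp.norm_apply_le x i).trans (mem_closedBall_zero_iff.1 hx)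

theorem EuclideanSpace.volume_cube :
    volume {x : EuclideanSpace ℝ ι | ∀ i, |x i| ≤ 1} = 2 ^ Fintype.card ι := by
  have hcube : {x : EuclideanSpace ℝ ι | ∀ i, |x i| ≤ 1} =
      WithLp.ofLp ⁻¹' Set.univ.pi fun _ => Set.Icc (-1) 1 := by
    ext x
    simp only [Set.mem_ofPred_eq, Set.mem_preimage, Set.mem_univ_pi, Set.mem_Icc, abs_le]
  rw [hcube, (PiLp.volume_preserving_ofLp ι).measure_preimage
    (MeasurableSet.univ_pi fun _ => measurableSet_Icc).nullMeasurableSet, volume_pi_pi]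
  norm_num [Real.volume_Icc]

end

theorem gromov_mass_star_normalization_euclidean_general
    (m : ℕ) :
    (∀ A : EuclideanSpace ℝ (Fin m) ≃ₗ[ℝ] EuclideanSpace ℝ (Fin m),
        Metric.closedBall (0 : EuclideanSpace ℝ (Fin m)) 1 ⊆
          A '' {x : EuclideanSpace ℝ (Fin m) | ∀ i, |x i| ≤ 1} →
        1 ≤ |LinearMap.det (A : EuclideanSpace ℝ (Fin m) →ₗ[ℝ] EuclideanSpace ℝ (Fin m))|) ∧
    IsLeast {v : ℝ≥0∞ | ∃ A : EuclideanSpace ℝ (Fin m) ≃ₗ[ℝ] EuclideanSpace ℝ (Fin m),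
        Metric.closedBall (0 : EuclideanSpace ℝ (Fin m)) 1 ⊆
          A '' {x : EuclideanSpace ℝ (Fin m) | ∀ i, |x i| ≤ 1} ∧
        v = volume (A '' {x : EuclideanSpace ℝ (Fin m) | ∀ i, |x i| ≤ 1})} (2 ^ m) ∧
    Metric.closedBall (0 : EuclideanSpace ℝ (Fin m)) 1 ⊆
      {x : EuclideanSpace ℝ (Fin m) | ∀ i, |x i| ≤ 1} ∧
    volume {x : EuclideanSpace ℝ (Fin m) | ∀ i, |x i| ≤ 1} = 2 ^ m := by
  have hvol : volume {x : EuclideanSpace ℝ (Fin m) | ∀ i, |x i| ≤ 1} = 2 ^ m := by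
    simpa using EuclideanSpace.volume_cube (ι := Fin m)
  have hball := EuclideanSpace.closedBall_zero_one_subset_cube (ι := Fin m)
  have hid : LinearEquiv.refl ℝ _ '' {x : EuclideanSpace ℝ (Fin m) | ∀ i, |x i| ≤ 1} =
      {x | ∀ i, |x i| ≤ 1} :=
    Set.image_id _
  refine ⟨fun A => one_le_abs_det_of_closedBall_subset_image_cube A,
    ⟨⟨LinearEquiv.refl ℝ _, by rwa [hid], by rw [hid, hvol]⟩, ?_⟩, hball, hvol⟩
  rintro v ⟨A, hA, rfl⟩
  rw [← LinearEquiv.coe_coe, Measure.addHaar_image_linearMap, hvol]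
  exact le_mul_of_one_le_left' (ENNReal.one_le_ofReal.2
    (one_le_abs_det_of_closedBall_subset_image_cube A hA))

/-- Normalization of the Gromov-mass-star volume on Euclidean space: any
parallelepiped `A '' {x | ∀ i, |x i| ≤ 1}` containing the Euclidean closed unit
ball satisfies `|det A| ≥ 1`; consequently the minimal Lebesgue measure of a
parallelepiped containing the Euclidean unit ball is exactly `2^m`, attained by
the cube `{x | ∀ i, |x i| ≤ 1}`. -/
theorem gromov_mass_star_normalization_euclidean
    (m : ℕ) (hm : 1 ≤ m) :
    (∀ A : EuclideanSpace ℝ (Fin m) ≃ₗ[ℝ] EuclideanSpace ℝ (Fin m),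
        Metric.closedBall (0 : EuclideanSpace ℝ (Fin m)) 1 ⊆
          A '' {x : EuclideanSpace ℝ (Fin m) | ∀ i, |x i| ≤ 1} →
        1 ≤ |LinearMap.det (A : EuclideanSpace ℝ (Fin m) →ₗ[ℝ] EuclideanSpace ℝ (Fin m))|) ∧
    IsLeast {v : ℝ≥0∞ | ∃ A : EuclideanSpace ℝ (Fin m) ≃ₗ[ℝ] EuclideanSpace ℝ (Fin m),
        Metric.closedBall (0 : EuclideanSpace ℝ (Fin m)) 1 ⊆
          A '' {x : EuclideanSpace ℝ (Fin m) | ∀ i, |x i| ≤ 1} ∧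
        v = volume (A '' {x : EuclideanSpace ℝ (Fin m) | ∀ i, |x i| ≤ 1})} (2 ^ m) ∧
    Metric.closedBall (0 : EuclideanSpace ℝ (Fin m)) 1 ⊆
      {x : EuclideanSpace ℝ (Fin m) | ∀ i, |x i| ≤ 1} ∧
    volume {x : EuclideanSpace ℝ (Fin m) | ∀ i, |x i| ≤ 1} = 2 ^ m :=
  gromov_mass_star_normalization_euclidean_general m
end

section
/- (Shrinking step in the proof that the Gromov-mass-star volume is Euclidean rigid.) Let m ≥ 1, let f_1, …, f_m be a basis of the dual space of ℝ^m, and let P = {x ∈ ℝ^m : |f_i(x)| ≤ 1 for all i}. Let K ⊆ P be a compact set such that |f_1(x)| < 1 for every x ∈ K. Then there exists a parallelepiped P' with K ⊆ P' and with Lebesgue measure of P' strictly smaller than the Lebesgue measure of P. -/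
/-!
In the linear coordinates `x ↦ (fᵢ x)ᵢ`, `P` is the cube `[-1, 1]^m`. By compactness
`|f₀| ≤ c < 1` on `K`, so `K` lies in the parallelepiped cut out by `c⁻¹ f₀, f₁, …, f_{m-1}`.
That is the preimage of `P` under the linear map rescaling the first coordinate by `c⁻¹`, so its
volume is `c · vol P < vol P`; here `0 < vol P < ∞` because `P` is a compact neighbourhood of `0`.
-/

open MeasureTheory Module Filter Topology

variable {ι E : Type*} [NormedAddCommGroup E] [NormedSpace ℝ E]

def dualBox (f : ι → Dual ℝ E) : Set E := {x | ∀ i, |f i x| ≤ 1}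

theorem mem_dualBox_mulSingle_inv_smul [DecidableEq ι] {f : ι → Dual ℝ E} {x : E}
    {i₀ : ι} {c : ℝ} (hc : 0 < c) (hx : x ∈ dualBox f) (hxc : |f i₀ x| ≤ c) :
    x ∈ dualBox fun i => (Pi.mulSingle i₀ c⁻¹ : ι → ℝ) i • f i := by
  intro i
  rcases eq_or_ne i i₀ with rfl | hi
  · simpa [abs_mul, abs_of_pos hc, inv_mul_le_iff₀ hc] using hxc
  · simpa [hi] using hx i

variable [Fintype ι] [FiniteDimensional ℝ E]

theorem dualBox_mem_nhds_zero (f : ι → Dual ℝ E) : dualBox f ∈ 𝓝 (0 : E) := by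
  refine eventually_all.2 fun i => ?_
  have : Tendsto (fun x => |f i x|) (𝓝 0) (𝓝 0) := by
    simpa using (f i).continuous_of_finiteDimensional.abs.tendsto 0
  exact this.eventually (Iic_mem_nhds one_pos)

theorem measure_dualBox_pos [MeasurableSpace E] (μ : Measure E) [μ.IsOpenPosMeasure]
    (f : ι → Dual ℝ E) : 0 < μ (dualBox f) :=
  μ.measure_pos_of_mem_nhds (dualBox_mem_nhds_zero f)

namespace Module.Basis

variable [DecidableEq ι] (f : Basis ι ℝ (Dual ℝ E))

noncomputable def dualCoordEquiv : E ≃ₗ[ℝ] (ι → ℝ) :=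
  (evalEquiv ℝ E).trans f.dualBasis.equivFun

@[simp]
theorem dualCoordEquiv_apply (x : E) (i : ι) : f.dualCoordEquiv x i = f i x := by
  simp [dualCoordEquiv]

theorem dualBox_eq_preimage_closedBall :
    dualBox f = f.dualCoordEquiv ⁻¹' Metric.closedBall 0 1 := by
  ext x
  simp [dualBox, pi_norm_le_iff_of_nonneg]

theorem isCompact_dualBox : IsCompact (dualBox f) := by
  rw [dualBox_eq_preimage_closedBall]
  exact f.dualCoordEquiv.toContinuousLinearEquiv.toHomeomorph.isCompact_preimage.2
    (isCompact_closedBall 0 1)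

theorem measure_dualBox_lt_top [MeasurableSpace E] (μ : Measure E)
    [IsFiniteMeasureOnCompacts μ] : μ (dualBox f) < ⊤ :=
  f.isCompact_dualBox.measure_lt_top

noncomputable def scaleCoords (c : ι → ℝ) : E →ₗ[ℝ] E :=
  f.dualCoordEquiv.symm.toLinearMap ∘ₗ Matrix.toLin' (Matrix.diagonal c) ∘ₗ
    f.dualCoordEquiv.toLinearMap

theorem apply_scaleCoords (c : ι → ℝ) (x : E) (i : ι) :
    f i (f.scaleCoords c x) = c i * f i x := by
  have h := congrFun (f.dualCoordEquiv.apply_symm_apply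
    ((Matrix.diagonal c).mulVec (f.dualCoordEquiv x))) i
  simpa [scaleCoords, Matrix.mulVec_diagonal] using h

theorem det_scaleCoords (c : ι → ℝ) : LinearMap.det (f.scaleCoords c) = ∏ i, c i := by
  rw [scaleCoords, ← LinearEquiv.symm_symm f.dualCoordEquiv,
    LinearEquiv.symm_symm f.dualCoordEquiv.symm, LinearMap.det_conj, LinearMap.det_toLin',
    Matrix.det_diagonal]

theorem dualBox_smul_eq_preimage (c : ι → ℝ) :
    dualBox (fun i => c i • f i) = f.scaleCoords c ⁻¹' dualBox f := by
  ext x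
  simp [dualBox, apply_scaleCoords]

theorem measure_dualBox_smul [MeasurableSpace E] [BorelSpace E] (μ : Measure E)
    [μ.IsAddHaarMeasure] {c : ι → ℝ} (hc : ∀ i, c i ≠ 0) :
    μ (dualBox fun i => c i • f i) = ENNReal.ofReal |∏ i, c i|⁻¹ * μ (dualBox f) := by
  have hdet : LinearMap.det (f.scaleCoords c) ≠ 0 := by
    rw [det_scaleCoords]
    exact Finset.prod_ne_zero_iff.2 fun i _ => hc i
  rw [dualBox_smul_eq_preimage, μ.addHaar_preimage_linearMap hdet, det_scaleCoords, abs_inv]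

end Module.Basis

theorem IsCompact.exists_pos_lt_one_forall_le {X : Type*} [TopologicalSpace X] {K : Set X}
    (hK : IsCompact K) {g : X → ℝ} (hg : ContinuousOn g K) (h : ∀ x ∈ K, g x < 1) :
    ∃ c, 0 < c ∧ c < 1 ∧ ∀ x ∈ K, g x ≤ c := by
  rcases K.eq_empty_or_nonempty with rfl | hne
  · exact ⟨1 / 2, by norm_num, by norm_num, by simp⟩
  obtain ⟨x₀, hx₀, hmax⟩ := hK.exists_isMaxOn hne hg
  exact ⟨max (g x₀) (1 / 2), by positivity, max_lt (h x₀ hx₀) (by norm_num),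
    fun x hx => le_max_of_le_left (hmax hx)⟩

/-- Shrinking step in the proof that the Gromov-mass-star volume is Euclidean rigid:
if `P = {x | ∀ i, |fᵢ x| ≤ 1}` for a basis `f` of the dual space, and `K ⊆ P` is a
compact set on which `|f₀ x| < 1`, then there is a parallelepiped `P'` (given by
another dual basis `g`) containing `K` with strictly smaller Lebesgue measure. -/
theorem parallelepiped_shrink
    (m : ℕ) (hm : 1 ≤ m)
    (f : Module.Basis (Fin m) ℝ (Module.Dual ℝ (EuclideanSpace ℝ (Fin m))))
    (K : Set (EuclideanSpace ℝ (Fin m))) (hK : IsCompact K)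
    (hKP : K ⊆ {x : EuclideanSpace ℝ (Fin m) | ∀ i, |f i x| ≤ 1})
    (hK1 : ∀ x ∈ K, |f ⟨0, hm⟩ x| < 1) :
    ∃ g : Module.Basis (Fin m) ℝ (Module.Dual ℝ (EuclideanSpace ℝ (Fin m))),
      K ⊆ {x : EuclideanSpace ℝ (Fin m) | ∀ i, |g i x| ≤ 1} ∧
      volume {x : EuclideanSpace ℝ (Fin m) | ∀ i, |g i x| ≤ 1} <
        volume {x : EuclideanSpace ℝ (Fin m) | ∀ i, |f i x| ≤ 1} := by
  set i₀ : Fin m := ⟨0, hm⟩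
  obtain ⟨c, hc0, hc1, hcK⟩ := hK.exists_pos_lt_one_forall_le
    (f i₀).continuous_of_finiteDimensional.abs.continuousOn hK1
  set d : Fin m → ℝ := Pi.mulSingle i₀ c⁻¹
  have hd : ∀ i, d i ≠ 0 := fun i => by
    rcases eq_or_ne i i₀ with rfl | hi <;> simp [d, *, hc0.ne']
  set g := f.isUnitSMul fun i => (hd i).isUnit
  have hg : ⇑g = fun i => d i • f i := funext (Basis.isUnitSMul_apply _)
  refine ⟨g, fun x hx => ?_, ?_⟩
  · change x ∈ dualBox g
    rw [hg]
    exact mem_dualBox_mulSingle_inv_smul hc0 (hKP hx) (hcK x hx)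
  · change volume (dualBox g) < volume (dualBox f)
    rw [hg, f.measure_dualBox_smul volume hd, Fintype.prod_pi_mulSingle', abs_inv, inv_inv,
      abs_of_pos hc0]
    calc ENNReal.ofReal c * volume (dualBox f) < 1 * volume (dualBox f) :=
          ENNReal.mul_lt_mul_left (measure_dualBox_pos volume _).ne'
            (f.measure_dualBox_lt_top volume).ne (ENNReal.ofReal_lt_one.2 hc1)
      _ = volume (dualBox f) := one_mul _
end

section
/- (The inscribed Riemannian volume is Euclidean rigid; concrete form.) Let m ≥ 1 and let ‖·‖ be a norm on ℝ^m with ‖x‖ ≥ |x| for all x ∈ ℝ^m, where |·| is the standard Euclidean norm. Assume there exists a linear map A : ℝ^m → ℝ^m with |det A| ≥ 1 such that A maps the Euclidean closed unit ball {x : |x| ≤ 1} into the closed unit ball {x : ‖x‖ ≤ 1}. Then ‖x‖ = |x| for all x ∈ ℝ^m. -/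
/-!
`A` maps the Euclidean unit ball `B` into `{N ≤ 1} ⊆ B`, while `|det A| ≥ 1` forces `A '' B` to
have at least the volume of `B`. A closed subset of `B` of full volume contains the interior of `B`
(what is left of it would be a nonempty open null set), hence all of `B`. Thus `N ≤ 1` on `B`, and
`N ≤ |·|` by homogeneity.
-/

open MeasureTheory Metric

theorem IsClosed.interior_subset_of_measure_le {X : Type*} [TopologicalSpace X]
    [MeasurableSpace X] [OpensMeasurableSpace X] (μ : Measure X) [μ.IsOpenPosMeasure]
    {F S : Set X} (hF : IsClosed F) (hFS : F ⊆ S) (hS : μ S ≠ ⊤) (hle : μ S ≤ μ F) :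
    interior S ⊆ F := by
  have hnull : μ (S \ F) = 0 :=
    (ae_eq_set.1 (ae_eq_of_subset_of_measure_ge hFS hle
      hF.measurableSet.nullMeasurableSet hS)).2
  have hempty : interior S \ F = ∅ :=
    (isOpen_interior.sdiff hF).eq_empty_of_measure_zero
      (μ := μ) (measure_mono_null (Set.sdiff_subset_sdiff_left interior_subset) hnull)
  exact Set.sdiff_eq_empty.1 hempty

theorem LinearMap.closure_interior_subset_image_of_one_le_abs_det {E : Type*}
    [NormedAddCommGroup E] [NormedSpace ℝ E] [FiniteDimensional ℝ E] [MeasurableSpace E]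
    [BorelSpace E] (μ : Measure E) [μ.IsAddHaarMeasure] (A : E →ₗ[ℝ] E)
    (hdet : 1 ≤ |LinearMap.det A|) {s : Set E} (hs : IsCompact s) (hAs : A '' s ⊆ s) :
    closure (interior s) ⊆ A '' s := by
  have hAs_compact : IsCompact (A '' s) := hs.image A.continuous_of_finiteDimensional
  have hvol : μ s ≤ μ (A '' s) := by
    rw [Measure.addHaar_image_linearMap]
    exact le_mul_of_one_le_left' (ENNReal.one_le_ofReal.2 hdet)
  exact closure_minimal
    (hAs_compact.isClosed.interior_subset_of_measure_le μ hAs hs.measure_ne_top hvol)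
    hAs_compact.isClosed

theorem le_norm_of_le_one_on_closedBall {E : Type*} [NormedAddCommGroup E] [NormedSpace ℝ E]
    {N : E → ℝ} (N_smul : ∀ (c : ℝ) x, N (c • x) = |c| * N x)
    (hball : ∀ x ∈ closedBall (0 : E) 1, N x ≤ 1) (x : E) : N x ≤ ‖x‖ := by
  rcases eq_or_ne x 0 with rfl | hx
  · simpa using (N_smul 0 0).le
  have hpos : 0 < ‖x‖ := norm_pos_iff.2 hx
  have hunit : ‖x‖⁻¹ • x ∈ closedBall (0 : E) 1 := by
    rw [mem_closedBall_zero_iff, norm_smul, norm_inv, norm_norm, inv_mul_cancel₀ hpos.ne']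
  calc N x = ‖x‖ * N (‖x‖⁻¹ • x) := by
        rw [N_smul, abs_inv, abs_norm, mul_inv_cancel_left₀ hpos.ne']
    _ ≤ ‖x‖ * 1 := by gcongr; exact hball _ hunit
    _ = ‖x‖ := mul_one _

theorem inscribed_riemannian_euclidean_rigid_general
    (m : ℕ) (N : EuclideanSpace ℝ (Fin m) → ℝ)
    (N_smul : ∀ (c : ℝ) (x), N (c • x) = |c| * N x)
    (hge : ∀ x, ‖x‖ ≤ N x)
    (A : EuclideanSpace ℝ (Fin m) →ₗ[ℝ] EuclideanSpace ℝ (Fin m))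
    (hdet : 1 ≤ |LinearMap.det A|)
    (hmaps : A '' Metric.closedBall (0 : EuclideanSpace ℝ (Fin m)) 1 ⊆ {x | N x ≤ 1}) :
    ∀ x, N x = ‖x‖ := by
  have hAball : A '' closedBall 0 1 ⊆ closedBall 0 1 := fun y hy =>
    mem_closedBall_zero_iff.2 ((hge y).trans (hmaps hy))
  have hball_sub : closedBall 0 1 ⊆ A '' closedBall 0 1 := by
    simpa only [interior_closedBall _ one_ne_zero, closure_ball _ one_ne_zero] using
      A.closure_interior_subset_image_of_one_le_abs_det volume hdet (isCompact_closedBall 0 1)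
        hAball
  exact fun x => le_antisymm
    (le_norm_of_le_one_on_closedBall N_smul (fun y hy => hmaps (hball_sub hy)) x) (hge x)

/-- The inscribed Riemannian volume is Euclidean rigid (concrete form): if a norm `N`
on `ℝ^m` dominates the Euclidean norm pointwise and there is a linear map `A` with
`|det A| ≥ 1` mapping the Euclidean closed unit ball into the `N`-unit ball, then
`N` equals the Euclidean norm. -/
theorem inscribed_riemannian_euclidean_rigid
    (m : ℕ) (hm : 1 ≤ m) (N : EuclideanSpace ℝ (Fin m) → ℝ)
    (N_add : ∀ x y, N (x + y) ≤ N x + N y)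
    (N_smul : ∀ (c : ℝ) (x), N (c • x) = |c| * N x)
    (N_eq_zero : ∀ x, N x = 0 → x = 0)
    (hge : ∀ x, ‖x‖ ≤ N x)
    (A : EuclideanSpace ℝ (Fin m) →ₗ[ℝ] EuclideanSpace ℝ (Fin m))
    (hdet : 1 ≤ |LinearMap.det A|)
    (hmaps : A '' Metric.closedBall (0 : EuclideanSpace ℝ (Fin m)) 1 ⊆ {x | N x ≤ 1}) :
    ∀ x, N x = ‖x‖ :=
  inscribed_riemannian_euclidean_rigid_general m N N_smul hge A hdet hmaps
end

section
/- (Minimal circumscribed ellipse of a regular 2n-gon.) Let n ≥ 2 and let C ⊂ ℝ² be the convex hull of the 2n points (cos(kπ/n), sin(kπ/n)) for k = 0, 1, …, 2n−1. Then for every invertible linear map A : ℝ² → ℝ² such that C is contained in A(D̄), where D̄ = {x ∈ ℝ² : |x| ≤ 1} is the Euclidean closed unit disk, one has |det A| ≥ 1. In other words, the Euclidean unit disk is an ellipse of minimal area containing C. -/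
/-!
If `A(D̄)` contains the polygon, then `B = A⁻¹` maps every vertex `v_k = (cos θ_k, sin θ_k)` into
the unit disk. Since `∑ₖ cos 2θ_k = ∑ₖ sin 2θ_k = 0` (the `n`-th roots of unity sum to
zero), the vertices satisfy `∑ₖ v_k v_kᵀ = n I`, so `∑ₖ ‖B v_k‖² = n ‖B‖_F²` and hence
`‖B‖_F² ≤ 2`. Finally `2 |det B| ≤ ‖B‖_F²`, so `|det B| ≤ 1` and `|det A| ≥ 1`.
-/

open MeasureTheory Real

theorem geom_sum_eq_zero_of_pow_eq_one {K : Type*} [DivisionRing K] {ζ : K} {m : ℕ}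
    (hζ : ζ ≠ 1) (hm : ζ ^ m = 1) : ∑ i ∈ Finset.range m, ζ ^ i = 0 := by
  rw [geom_sum_eq hζ, hm, sub_self, zero_div]

theorem Complex.sum_range_exp_two_pi_mul_I_eq_zero {n m : ℕ} (hn : 2 ≤ n) (hnm : n ∣ m) :
    ∑ k ∈ Finset.range m, Complex.exp (↑(2 * π * k / n) * Complex.I) = 0 := by
  have hζ := Complex.isPrimitiveRoot_exp n (by omega)
  obtain ⟨j, rfl⟩ := hnm
  convert geom_sum_eq_zero_of_pow_eq_one (m := n * j) (hζ.ne_one (by omega))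
    (by rw [pow_mul, hζ.pow_eq_one, one_pow]) using 2 with k
  rw [← Complex.exp_nat_mul]
  push_cast
  ring_nf

theorem Real.sum_range_cos_two_pi_mul_eq_zero {n m : ℕ} (hn : 2 ≤ n) (hnm : n ∣ m) :
    ∑ k ∈ Finset.range m, cos (2 * π * k / n) = 0 := by
  simpa only [Complex.re_sum, Complex.zero_re, Complex.exp_ofReal_mul_I_re] using
    congrArg Complex.re (Complex.sum_range_exp_two_pi_mul_I_eq_zero hn hnm)

theorem Real.sum_range_sin_two_pi_mul_eq_zero {n m : ℕ} (hn : 2 ≤ n) (hnm : n ∣ m) :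
    ∑ k ∈ Finset.range m, sin (2 * π * k / n) = 0 := by
  simpa only [Complex.im_sum, Complex.zero_im, Complex.exp_ofReal_mul_I_im] using
    congrArg Complex.im (Complex.sum_range_exp_two_pi_mul_I_eq_zero hn hnm)

theorem sq_add_sq_linear_cos_sin (a b c d θ : ℝ) :
    (a * cos θ + b * sin θ) ^ 2 + (c * cos θ + d * sin θ) ^ 2 =
      (a ^ 2 + b ^ 2 + c ^ 2 + d ^ 2) / 2 + (a ^ 2 - b ^ 2 + c ^ 2 - d ^ 2) / 2 * cos (2 * θ)
        + (a * b + c * d) * sin (2 * θ) := by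
  rw [cos_two_mul, sin_two_mul]
  linear_combination (b ^ 2 + d ^ 2) * sin_sq_add_cos_sq θ

theorem sum_regular_polygon_sq_add_sq_linear_cos_sin (a b c d : ℝ) {n : ℕ} (hn : 2 ≤ n) :
    ∑ k ∈ Finset.range (2 * n),
      ((a * cos (k * π / n) + b * sin (k * π / n)) ^ 2
        + (c * cos (k * π / n) + d * sin (k * π / n)) ^ 2) =
      n * (a ^ 2 + b ^ 2 + c ^ 2 + d ^ 2) := by
  have h_two_mul (k : ℕ) : 2 * (k * π / n) = 2 * π * k / n := by ring
  simp only [sq_add_sq_linear_cos_sin, h_two_mul, Finset.sum_add_distrib, ← Finset.mul_sum,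
    Real.sum_range_cos_two_pi_mul_eq_zero hn (dvd_mul_left n 2),
    Real.sum_range_sin_two_pi_mul_eq_zero hn (dvd_mul_left n 2), Finset.sum_const,
    Finset.card_range, nsmul_eq_mul]
  push_cast
  ring

theorem two_mul_abs_det_le_sum_sq (a b c d : ℝ) :
    2 * |a * d - b * c| ≤ a ^ 2 + b ^ 2 + c ^ 2 + d ^ 2 := by
  rw [mul_comm, ← le_div_iff₀ two_pos, abs_le]
  constructor <;>
    nlinarith [sq_nonneg (a + d), sq_nonneg (b - c), sq_nonneg (a - d), sq_nonneg (b + c)]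

theorem EuclideanSpace.norm_sq_fin_two (x : EuclideanSpace ℝ (Fin 2)) :
    ‖x‖ ^ 2 = x 0 ^ 2 + x 1 ^ 2 := by
  simp [EuclideanSpace.norm_sq_eq, Fin.sum_univ_two]

theorem Matrix.norm_sq_toEuclideanLin_fin_two (M : Matrix (Fin 2) (Fin 2) ℝ) (x y : ℝ) :
    ‖M.toEuclideanLin ((EuclideanSpace.equiv (Fin 2) ℝ).symm ![x, y])‖ ^ 2 =
      (M 0 0 * x + M 0 1 * y) ^ 2 + (M 1 0 * x + M 1 1 * y) ^ 2 := by
  rw [EuclideanSpace.norm_sq_fin_two]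
  simp [Matrix.toLpLin_apply]

theorem LinearMap.abs_det_le_one_of_norm_apply_regular_polygon_le_one
    (f : EuclideanSpace ℝ (Fin 2) →ₗ[ℝ] EuclideanSpace ℝ (Fin 2)) {n : ℕ} (hn : 2 ≤ n)
    (hf : ∀ k < 2 * n,
      ‖f ((EuclideanSpace.equiv (Fin 2) ℝ).symm ![cos (k * π / n), sin (k * π / n)])‖ ≤ 1) :
    |LinearMap.det f| ≤ 1 := by
  set b := (EuclideanSpace.basisFun (Fin 2) ℝ).toBasis
  set M := LinearMap.toMatrix b b f
  have hM : M.toEuclideanLin = f := by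
    rw [Matrix.toEuclideanLin_eq_toLin_orthonormal, Matrix.toLin_toMatrix]
  have h_sum : (n : ℝ) * (M 0 0 ^ 2 + M 0 1 ^ 2 + M 1 0 ^ 2 + M 1 1 ^ 2) ≤ n * 2 := by
    rw [← sum_regular_polygon_sq_add_sq_linear_cos_sin _ _ _ _ hn]
    calc _ ≤ ∑ _k ∈ Finset.range (2 * n), (1 : ℝ) := by
          refine Finset.sum_le_sum fun k hk => ?_
          rw [← Matrix.norm_sq_toEuclideanLin_fin_two, hM]
          exact pow_le_one₀ (norm_nonneg _) (hf k (Finset.mem_range.mp hk))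
      _ = n * 2 := by simp [mul_comm]
  have h_frobenius := le_of_mul_le_mul_left h_sum (by positivity)
  rw [← LinearMap.det_toMatrix b, Matrix.det_fin_two]
  linarith [two_mul_abs_det_le_sum_sq (M 0 0) (M 0 1) (M 1 0) (M 1 1)]

/-- Minimal circumscribed ellipse of a regular `2n`-gon: the Euclidean closed unit
disk is an ellipse of minimal area containing the regular `2n`-gon inscribed in the
unit circle. -/
theorem regular_polygon_min_circumscribed_ellipse
    (n : ℕ) (hn : 2 ≤ n)
    (C : Set (EuclideanSpace ℝ (Fin 2)))
    (hC : C = convexHull ℝ (Set.range fun k : Fin (2 * n) =>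
      (EuclideanSpace.equiv (Fin 2) ℝ).symm
        ![Real.cos (k * π / n), Real.sin (k * π / n)])) :
    ∀ A : EuclideanSpace ℝ (Fin 2) ≃ₗ[ℝ] EuclideanSpace ℝ (Fin 2),
      C ⊆ A '' Metric.closedBall (0 : EuclideanSpace ℝ (Fin 2)) 1 →
        1 ≤ |LinearMap.det (A : EuclideanSpace ℝ (Fin 2) →ₗ[ℝ] EuclideanSpace ℝ (Fin 2))| := by
  intro A hA
  subst hC
  have h_symm : |LinearMap.det (A.symm : EuclideanSpace ℝ (Fin 2) →ₗ[ℝ] _)| ≤ 1 := by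
    refine LinearMap.abs_det_le_one_of_norm_apply_regular_polygon_le_one _ hn fun k hk => ?_
    obtain ⟨x, hx, hAx⟩ :=
      hA (subset_convexHull ℝ _ (Set.mem_range_self (⟨k, hk⟩ : Fin (2 * n))))
    rw [← hAx, LinearEquiv.coe_coe, A.symm_apply_apply]
    simpa using hx
  calc 1 = |LinearMap.det (A : EuclideanSpace ℝ (Fin 2) →ₗ[ℝ] _)|
        * |LinearMap.det (A.symm : EuclideanSpace ℝ (Fin 2) →ₗ[ℝ] _)| := by
        rw [← abs_mul, A.det_mul_det_symm, abs_one]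
    _ ≤ |LinearMap.det (A : EuclideanSpace ℝ (Fin 2) →ₗ[ℝ] _)| :=
        mul_le_of_le_one_right (abs_nonneg _) h_symm
end

section
/- (The circumscribed Riemannian volume is not Euclidean rigid.) There exists a norm ‖·‖ on ℝ² such that: (i) ‖x‖ ≥ |x| for all x ∈ ℝ², where |·| is the Euclidean norm; (ii) ‖·‖ ≠ |·|; and (iii) for every invertible linear map A : ℝ² → ℝ² with {x : ‖x‖ ≤ 1} ⊆ A(D̄), where D̄ = {x ∈ ℝ² : |x| ≤ 1} is the Euclidean closed unit disk, one has |det A| ≥ 1 (i.e. every ellipse containing the ‖·‖-unit ball has area at least π, so the minimal circumscribed ellipse of the ‖·‖-unit ball has the same area as that of the Euclidean disk). -/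
/-!
The witness is the `ℓ¹` norm, whose unit ball is the square with vertices `±e₁, ±e₂`, i.e. the
regular `2n`-gon for `n = 2` inscribed in the unit circle. If an ellipse `A '' D̄` contains the
square, the vectors `A⁻¹ eᵢ` lie in `D̄`, so Hadamard's inequality gives
`|det A⁻¹| = |det (A⁻¹ e₁, A⁻¹ e₂)| ≤ ‖A⁻¹ e₁‖ ‖A⁻¹ e₂‖ ≤ 1`.
-/

namespace OrthonormalBasis

section CrossNorm

variable {ι E : Type*} [Fintype ι] [NormedAddCommGroup E] [InnerProductSpace ℝ E]

/-- The norm whose unit ball is the cross-polytope `conv {± b i}`. -/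
noncomputable def crossNorm (b : OrthonormalBasis ι ℝ E) (x : E) : ℝ :=
  ∑ i, |b.repr x i|

variable (b : OrthonormalBasis ι ℝ E)

theorem crossNorm_add_le (x y : E) : b.crossNorm (x + y) ≤ b.crossNorm x + b.crossNorm y := by
  simp only [crossNorm, map_add, PiLp.add_apply, ← Finset.sum_add_distrib]
  exact Finset.sum_le_sum fun i _ => abs_add_le _ _

theorem crossNorm_smul (c : ℝ) (x : E) : b.crossNorm (c • x) = |c| * b.crossNorm x := by
  simp only [crossNorm, map_smul, PiLp.smul_apply, smul_eq_mul, abs_mul, Finset.mul_sum]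

theorem norm_le_crossNorm (x : E) : ‖x‖ ≤ b.crossNorm x :=
  calc ‖x‖ = ‖∑ i, b.repr x i • b i‖ := by rw [b.sum_repr]
    _ ≤ ∑ i, ‖b.repr x i • b i‖ := norm_sum_le _ _
    _ = b.crossNorm x := by simp [crossNorm, norm_smul, b.orthonormal.1]

theorem eq_zero_of_crossNorm_eq_zero {x : E} (hx : b.crossNorm x = 0) : x = 0 :=
  norm_le_zero_iff.mp (hx ▸ b.norm_le_crossNorm x)

theorem crossNorm_self [DecidableEq ι] (i : ι) : b.crossNorm (b i) = 1 := by
  simp [crossNorm, b.repr_self, apply_ite]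

theorem norm_lt_crossNorm_add [DecidableEq ι] {i j : ι} (hij : i ≠ j) :
    ‖b i + b j‖ < b.crossNorm (b i + b j) := by
  have hnorm : ‖b i + b j‖ ^ 2 = 2 := by
    rw [sq, norm_add_sq_eq_norm_sq_add_norm_sq_real (b.orthonormal.2 hij), b.orthonormal.1 i,
      b.orthonormal.1 j]
    norm_num
  have hcross : 2 ≤ b.crossNorm (b i + b j) := by
    calc (2 : ℝ) = ∑ k ∈ {i, j}, |b.repr (b i + b j) k| := by
          norm_num [Finset.sum_pair hij, b.repr_self, hij, hij.symm]
      _ ≤ b.crossNorm (b i + b j) :=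
          Finset.sum_le_sum_of_subset_of_nonneg (Finset.subset_univ _) fun k _ _ => abs_nonneg _
  nlinarith [norm_nonneg (b i + b j)]

end CrossNorm

variable {n : ℕ} {E : Type*} [NormedAddCommGroup E] [InnerProductSpace ℝ E]

theorem abs_det_le_prod_norm_s6 (b : OrthonormalBasis (Fin n) ℝ E) (v : Fin n → E) :
    |b.toBasis.det v| ≤ ∏ i, ‖v i‖ := by
  have : Fact (Module.finrank ℝ E = n) := ⟨by simpa using Module.finrank_eq_card_basis b.toBasis⟩
  rw [← b.toBasis.orientation.volumeForm_robust' b v]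
  exact b.toBasis.orientation.abs_volumeForm_apply_le v

theorem one_le_abs_det_of_mem_image_closedBall (b : OrthonormalBasis (Fin n) ℝ E) (A : E ≃ₗ[ℝ] E)
    (hA : ∀ i, b i ∈ A '' Metric.closedBall 0 1) : 1 ≤ |LinearMap.det (A : E →ₗ[ℝ] E)| := by
  have hsymm : |LinearMap.det (A.symm : E →ₗ[ℝ] E)| ≤ 1 := by
    calc |LinearMap.det (A.symm : E →ₗ[ℝ] E)|
        = |b.toBasis.det (A.symm ∘ b)| := by
          rw [show (A.symm ∘ b : Fin n → E) = (A.symm : E →ₗ[ℝ] E) ∘ b.toBasis by simp,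
            Module.Basis.det_comp, Module.Basis.det_self, mul_one]
      _ ≤ ∏ i, ‖A.symm (b i)‖ := b.abs_det_le_prod_norm_s6 _
      _ ≤ 1 := Finset.prod_le_one (fun _ _ => norm_nonneg _) fun i _ => by
          obtain ⟨y, hy, hAy⟩ := hA i
          simpa [← hAy] using hy
  have hmul : |LinearMap.det (A : E →ₗ[ℝ] E)| * |LinearMap.det (A.symm : E →ₗ[ℝ] E)| = 1 := by
    rw [← abs_mul, LinearEquiv.det_mul_det_symm, abs_one]
  nlinarith [abs_nonneg (LinearMap.det (A : E →ₗ[ℝ] E))]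

end OrthonormalBasis

/-- The circumscribed Riemannian volume is not Euclidean rigid: there is a norm on
`ℝ²` dominating the Euclidean norm, different from it, such that every ellipse
`A '' D̄` containing its unit ball satisfies `|det A| ≥ 1`. -/
theorem circumscribed_riemannian_not_euclidean_rigid :
    ∃ N : EuclideanSpace ℝ (Fin 2) → ℝ,
      (∀ x y, N (x + y) ≤ N x + N y) ∧
      (∀ (c : ℝ) (x), N (c • x) = |c| * N x) ∧
      (∀ x, N x = 0 → x = 0) ∧
      (∀ x, ‖x‖ ≤ N x) ∧
      (N ≠ fun x => ‖x‖) ∧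
      (∀ A : EuclideanSpace ℝ (Fin 2) ≃ₗ[ℝ] EuclideanSpace ℝ (Fin 2),
        {x | N x ≤ 1} ⊆ A '' Metric.closedBall (0 : EuclideanSpace ℝ (Fin 2)) 1 →
          1 ≤ |LinearMap.det (A : EuclideanSpace ℝ (Fin 2) →ₗ[ℝ] EuclideanSpace ℝ (Fin 2))|) := by
  let b := EuclideanSpace.basisFun (Fin 2) ℝ
  refine ⟨b.crossNorm, b.crossNorm_add_le, b.crossNorm_smul,
    fun _ => b.eq_zero_of_crossNorm_eq_zero, b.norm_le_crossNorm, fun h => ?_,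
    fun A hA => b.one_le_abs_det_of_mem_image_closedBall A fun i => hA (b.crossNorm_self i).le⟩
  exact (b.norm_lt_crossNorm_add (i := 0) (j := 1) (by decide)).ne (congrFun h _).symm
end

section
/- (Euclidean space is an essential length space.) Let m ≥ 1, let x, y ∈ ℝ^m, let N ⊆ ℝ^m be a set of Lebesgue measure zero, and let ε > 0. Then there exists a Lipschitz curve γ : [0,1] → ℝ^m with γ(0) = x, γ(1) = y, such that the set γ^{-1}(N) ⊆ [0,1] has one-dimensional Lebesgue measure zero, and the length of γ satisfies L(γ) ≤ |x − y| + ε. -/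
/-!
For `v` in a small ball consider the parabolic arc `t ↦ x + t (y - x) + (t - t²) v` from `x`
to `y`; it is `(‖y - x‖ + ‖v‖)`-Lipschitz on `[0, 1]`, so its length is at most
`‖x - y‖ + ‖v‖`. For fixed `t ∈ (0, 1)` the map `v ↦ x + t (y - x) + (t - t²) v` is an
invertible affine map, so it meets the null set `N` only for a null set of `v`. By Fubini,
for almost every `v` the arc meets `N` only for a null set of times; any such `v` with
`‖v‖ ≤ ε` gives the curve.
-/

open MeasureTheory Set Filter

theorem LipschitzOnWith.eVariationOn_Icc_le {E : Type*} [PseudoEMetricSpace E] {f : ℝ → E}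
    {K : NNReal} {a b : ℝ} (hf : LipschitzOnWith K f (Icc a b)) :
    eVariationOn f (Icc a b) ≤ K * ENNReal.ofReal (b - a) :=
  eVariationOn_id_Icc a b ▸ hf.comp_eVariationOn_le (mapsTo_id _)

section BentPath

variable {E : Type*} [NormedAddCommGroup E] [NormedSpace ℝ E]

def bentPath (x y v : E) (t : ℝ) : E := x + t • (y - x) + (t - t ^ 2) • v

variable (x y v : E)

@[simp]
theorem bentPath_zero : bentPath x y v 0 = x := by simp [bentPath]

@[simp]
theorem bentPath_one : bentPath x y v 1 = y := by simp [bentPath]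

theorem bentPath_sub_bentPath (s t : ℝ) :
    bentPath x y v s - bentPath x y v t = (s - t) • (y - x) + ((s - t) * (1 - (s + t))) • v := by
  simp only [bentPath]
  module

theorem continuous_bentPath_uncurry : Continuous fun p : E × ℝ => bentPath x y p.1 p.2 := by
  unfold bentPath
  fun_prop

theorem lipschitzOnWith_bentPath :
    LipschitzOnWith (‖y - x‖₊ + ‖v‖₊) (bentPath x y v) (Icc 0 1) := by
  refine LipschitzOnWith.of_dist_le_mul fun s hs t ht => ?_
  have hst : |1 - (s + t)| ≤ 1 := abs_le.2 ⟨by linarith [hs.2, ht.2], by linarith [hs.1, ht.1]⟩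
  rw [dist_eq_norm, dist_eq_norm, bentPath_sub_bentPath, Real.norm_eq_abs]
  calc ‖(s - t) • (y - x) + ((s - t) * (1 - (s + t))) • v‖
      ≤ |s - t| * ‖y - x‖ + |s - t| * |1 - (s + t)| * ‖v‖ := by
        grw [norm_add_le, norm_smul, norm_smul, Real.norm_eq_abs, Real.norm_eq_abs, abs_mul]
    _ ≤ |s - t| * ‖y - x‖ + |s - t| * 1 * ‖v‖ := by gcongr
    _ = (‖y - x‖₊ + ‖v‖₊ : NNReal) * |s - t| := by push_cast; ring

variable [MeasurableSpace E] [BorelSpace E] [FiniteDimensional ℝ E]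
  (μ : Measure E) [μ.IsAddHaarMeasure]

theorem addHaar_setOf_bentPath_mem_eq_zero {N : Set E} (hN : μ N = 0) {t : ℝ}
    (ht : t ∈ Ioo 0 1) : μ {v | bentPath x y v t ∈ N} = 0 := by
  have hr : t - t ^ 2 ≠ 0 := by nlinarith [ht.1, ht.2]
  change μ (((t - t ^ 2) • ·) ⁻¹' ((x + t • (y - x) + ·) ⁻¹' N)) = 0
  rw [Measure.addHaar_preimage_smul μ hr, measure_preimage_add, hN, mul_zero]

theorem ae_volume_bentPath_preimage_eq_zero {N : Set E} (hN : μ N = 0) :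
    ∀ᵐ v ∂μ, volume (bentPath x y v ⁻¹' N ∩ Icc 0 1) = 0 := by
  obtain ⟨N', hNN', hN'meas, hN'0⟩ := exists_measurable_superset_of_null hN
  have hmeas : MeasurableSet {p : E × ℝ | p.2 ∈ Ioo 0 1 → bentPath x y p.1 p.2 ∉ N'} :=
    (measurableSet_Ioo.preimage measurable_snd).himp
      ((continuous_bentPath_uncurry x y).measurable hN'meas).compl
  have hsections : ∀ᵐ t ∂volume, ∀ᵐ v ∂μ, t ∈ Ioo 0 1 → bentPath x y v t ∉ N' :=
    Eventually.of_forall fun t => by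
      by_cases ht : t ∈ Ioo 0 1
      · simpa [ht] using measure_eq_zero_iff_ae_notMem.1
          (addHaar_setOf_bentPath_mem_eq_zero x y μ hN'0 ht)
      · simp [ht]
  filter_upwards [(Measure.ae_ae_comm hmeas).2 hsections] with v hv
  rw [measure_congr ((ae_eq_refl _).inter Ioo_ae_eq_Icc.symm)]
  refine measure_mono_null (inter_subset_inter_left _ (preimage_mono hNN'))
    (measure_eq_zero_iff_ae_notMem.2 ?_)
  filter_upwards [hv] with t ht hmem using ht hmem.2 hmem.1

end BentPath

theorem euclidean_essential_length_space_general
    (m : ℕ) (x y : EuclideanSpace ℝ (Fin m))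
    (N : Set (EuclideanSpace ℝ (Fin m))) (hN : volume N = 0)
    (ε : ℝ) (hε : 0 < ε) :
    ∃ γ : ℝ → EuclideanSpace ℝ (Fin m),
      (∃ K : NNReal, LipschitzOnWith K γ (Icc 0 1)) ∧
      γ 0 = x ∧ γ 1 = y ∧
      volume (γ ⁻¹' N ∩ Icc 0 1) = 0 ∧
      eVariationOn γ (Icc 0 1) ≤ ENNReal.ofReal (‖x - y‖ + ε) := by
  obtain ⟨v, hv, hvN⟩ := Measure.exists_mem_of_measure_ne_zero_of_ae
    (Metric.measure_closedBall_pos volume 0 hε).ne'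
    (ae_restrict_of_ae (ae_volume_bentPath_preimage_eq_zero x y volume hN))
  have hvε : ‖v‖ ≤ ε := by simpa using hv
  refine ⟨bentPath x y v, ⟨_, lipschitzOnWith_bentPath x y v⟩, bentPath_zero x y v,
    bentPath_one x y v, hvN, ?_⟩
  calc eVariationOn (bentPath x y v) (Icc 0 1)
      ≤ (‖y - x‖₊ + ‖v‖₊ : NNReal) * ENNReal.ofReal (1 - 0) :=
        (lipschitzOnWith_bentPath x y v).eVariationOn_Icc_le
    _ = ENNReal.ofReal (‖x - y‖ + ‖v‖) := by
        rw [sub_zero, ENNReal.ofReal_one, mul_one, norm_sub_rev, ← ENNReal.ofReal_coe_nnreal]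
        rfl
    _ ≤ ENNReal.ofReal (‖x - y‖ + ε) := by gcongr

/-- Euclidean space is an essential length space: given points `x, y`, a Lebesgue-null
set `N` and `ε > 0`, there is a Lipschitz curve from `x` to `y` spending zero time in
`N` whose length is at most `‖x - y‖ + ε`. -/
theorem euclidean_essential_length_space
    (m : ℕ) (hm : 1 ≤ m) (x y : EuclideanSpace ℝ (Fin m))
    (N : Set (EuclideanSpace ℝ (Fin m))) (hN : volume N = 0)
    (ε : ℝ) (hε : 0 < ε) :
    ∃ γ : ℝ → EuclideanSpace ℝ (Fin m),
      (∃ K : NNReal, LipschitzOnWith K γ (Icc 0 1)) ∧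
      γ 0 = x ∧ γ 1 = y ∧
      volume (γ ⁻¹' N ∩ Icc 0 1) = 0 ∧
      eVariationOn γ (Icc 0 1) ≤ ENNReal.ofReal (‖x - y‖ + ε) :=
  euclidean_essential_length_space_general m x y N hN ε hε
end

section
/- (Shortcut metric construction, generalizing the sphere counterexample.) Let (X, D) be a metric space and let C ⊆ X be a nonempty subset. Define d : X × X → ℝ by d(x,y) = min( D(x,y), inf_{v,w ∈ C} ( D(x,v) + (1/2) D(v,w) + D(w,y) ) ). Then d is a metric on X and (1/2) D(x,y) ≤ d(x,y) ≤ D(x,y) for all x, y ∈ X. In particular the identity map (X,D) → (X,d) is 1-Lipschitz and its inverse is 2-Lipschitz. -/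
/-!
The infimum term is the length of the cheapest route from `x` to `y` that jumps into `C`, travels
between two points of `C` at the reduced cost `c · D`, and jumps out again. Splicing two such
routes, or a route with a direct segment, is again such a route up to the triangle inequality
(this needs `c ≤ 1`), which gives the triangle inequality for `d`. Every route costs at least
`c · D(x, y)`, so `c · D ≤ d ≤ D`, and `d` separates points as soon as `c > 0`.
-/

section Shortcut

variable {X : Type*} [MetricSpace X] {C : Set X} {c : ℝ}

noncomputable def shortcutDist (C : Set X) (c : ℝ) (x y : X) : ℝ :=
  ⨅ v : C, ⨅ w : C, dist x (v : X) + c * dist (v : X) (w : X) + dist (w : X) y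

noncomputable def shortcutMetric (C : Set X) (c : ℝ) (x y : X) : ℝ :=
  min (dist x y) (shortcutDist C c x y)

section shortcutDist

theorem shortcutDist_le (hc : 0 ≤ c) (x y : X) (v w : C) :
    shortcutDist C c x y ≤ dist x (v : X) + c * dist (v : X) (w : X) + dist (w : X) y := by
  have : Nonempty C := ⟨v⟩
  refine (ciInf_le ⟨0, ?_⟩ v).trans (ciInf_le ⟨0, ?_⟩ w)
  · rintro _ ⟨v', rfl⟩
    exact le_ciInf fun w' => by positivity
  · rintro _ ⟨w', rfl⟩
    positivity

variable [Nonempty C]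

theorem le_shortcutDist {a : ℝ} {x y : X}
    (h : ∀ v w : C, a ≤ dist x (v : X) + c * dist (v : X) (w : X) + dist (w : X) y) :
    a ≤ shortcutDist C c x y :=
  le_ciInf fun v => le_ciInf fun w => h v w

theorem mul_dist_le_shortcutDist (hc₀ : 0 ≤ c) (hc₁ : c ≤ 1) (x y : X) :
    c * dist x y ≤ shortcutDist C c x y :=
  le_shortcutDist fun v w => by
    have := dist_triangle4 x (v : X) (w : X) y
    nlinarith [dist_nonneg (x := x) (y := (v : X)), dist_nonneg (x := (w : X)) (y := y)]

theorem shortcutDist_comm (hc : 0 ≤ c) (x y : X) :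
    shortcutDist C c x y = shortcutDist C c y x := by
  have key : ∀ x y : X, shortcutDist C c x y ≤ shortcutDist C c y x := fun x y =>
    le_shortcutDist fun v w => by
      have := shortcutDist_le hc x y w v
      rw [dist_comm x (w : X), dist_comm (w : X) (v : X), dist_comm (v : X) y] at this
      linarith
  exact le_antisymm (key x y) (key y x)

theorem shortcutDist_le_dist_add (hc : 0 ≤ c) (x y z : X) :
    shortcutDist C c x z ≤ dist x y + shortcutDist C c y z := by
  rw [← sub_le_iff_le_add']
  refine le_shortcutDist fun v w => ?_
  have := shortcutDist_le hc x z v w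
  have := dist_triangle x y (v : X)
  linarith

theorem shortcutDist_le_add_dist (hc : 0 ≤ c) (x y z : X) :
    shortcutDist C c x z ≤ shortcutDist C c x y + dist y z := by
  rw [shortcutDist_comm hc x, shortcutDist_comm hc x, dist_comm, add_comm]
  exact shortcutDist_le_dist_add hc z y x

theorem shortcutDist_le_dist_add_mul_dist_add (hc₀ : 0 ≤ c) (hc₁ : c ≤ 1) (x z : X) (v w : C) :
    shortcutDist C c x z ≤ dist x (v : X) + c * dist (v : X) (w : X) + shortcutDist C c w z := by
  rw [← sub_le_iff_le_add']
  refine le_shortcutDist fun v' w' => ?_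
  have := shortcutDist_le hc₀ x z v w'
  have := dist_triangle4 (v : X) (w : X) (v' : X) (w' : X)
  nlinarith [dist_nonneg (x := (w : X)) (y := (v' : X))]

theorem shortcutDist_triangle (hc₀ : 0 ≤ c) (hc₁ : c ≤ 1) (x y z : X) :
    shortcutDist C c x z ≤ shortcutDist C c x y + shortcutDist C c y z := by
  rw [← sub_le_iff_le_add]
  refine le_shortcutDist fun v w => ?_
  have := shortcutDist_le_dist_add_mul_dist_add hc₀ hc₁ x z v w
  have := shortcutDist_le_dist_add (C := C) hc₀ (w : X) y z
  linarith

end shortcutDist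

section shortcutMetric

theorem shortcutMetric_le_dist (x y : X) : shortcutMetric C c x y ≤ dist x y :=
  min_le_left _ _

variable [Nonempty C]

theorem mul_dist_le_shortcutMetric (hc₀ : 0 ≤ c) (hc₁ : c ≤ 1) (x y : X) :
    c * dist x y ≤ shortcutMetric C c x y :=
  le_min (mul_le_of_le_one_left dist_nonneg hc₁) (mul_dist_le_shortcutDist hc₀ hc₁ x y)

theorem shortcutMetric_nonneg (hc₀ : 0 ≤ c) (hc₁ : c ≤ 1) (x y : X) :
    0 ≤ shortcutMetric C c x y :=
  (mul_nonneg hc₀ dist_nonneg).trans (mul_dist_le_shortcutMetric hc₀ hc₁ x y)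

theorem shortcutMetric_eq_zero_iff (hc₀ : 0 < c) (hc₁ : c ≤ 1) {x y : X} :
    shortcutMetric C c x y = 0 ↔ x = y := by
  refine ⟨fun h => dist_le_zero.mp ?_, fun h => ?_⟩
  · have := mul_dist_le_shortcutMetric (C := C) hc₀.le hc₁ x y
    rw [h] at this
    exact nonpos_of_mul_nonpos_right this hc₀
  · subst h
    exact le_antisymm (dist_self x ▸ shortcutMetric_le_dist x x)
      (shortcutMetric_nonneg hc₀.le hc₁ x x)

theorem shortcutMetric_comm (hc : 0 ≤ c) (x y : X) :
    shortcutMetric C c x y = shortcutMetric C c y x := by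
  rw [shortcutMetric, shortcutMetric, dist_comm, shortcutDist_comm hc]

theorem shortcutMetric_triangle (hc₀ : 0 ≤ c) (hc₁ : c ≤ 1) (x y z : X) :
    shortcutMetric C c x z ≤ shortcutMetric C c x y + shortcutMetric C c y z := by
  unfold shortcutMetric
  rcases min_choice (dist x y) (shortcutDist C c x y) with hxy | hxy <;>
    rcases min_choice (dist y z) (shortcutDist C c y z) with hyz | hyz <;> rw [hxy, hyz]
  · exact min_le_of_left_le (dist_triangle x y z)
  · exact min_le_of_right_le (shortcutDist_le_dist_add hc₀ x y z)
  · exact min_le_of_right_le (shortcutDist_le_add_dist hc₀ x y z)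
  · exact min_le_of_right_le (shortcutDist_triangle hc₀ hc₁ x y z)

end shortcutMetric

end Shortcut

/-- Shortcut metric construction: given a metric space `(X, D)` and a nonempty set
`C ⊆ X`, the function
`d(x,y) = min(D(x,y), inf_{v,w ∈ C} (D(x,v) + D(v,w)/2 + D(w,y)))`
is a metric on `X` satisfying `D/2 ≤ d ≤ D`; in particular the identity
`(X,D) → (X,d)` is 1-Lipschitz with 2-Lipschitz inverse. -/
theorem shortcut_metric
    (X : Type*) [MetricSpace X] (C : Set X) (hC : C.Nonempty)
    (d : X → X → ℝ)
    (hd : ∀ x y, d x y =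
      min (dist x y) (⨅ v : C, ⨅ w : C, dist x (v : X) + (1 / 2) * dist (v : X) (w : X) + dist (w : X) y)) :
    (∀ x y, 0 ≤ d x y) ∧
    (∀ x y, d x y = 0 ↔ x = y) ∧
    (∀ x y, d x y = d y x) ∧
    (∀ x y z, d x z ≤ d x y + d y z) ∧
    (∀ x y, (1 / 2) * dist x y ≤ d x y ∧ d x y ≤ dist x y) := by
  have : Nonempty C := hC.to_subtype
  obtain rfl : d = shortcutMetric C (1 / 2) := funext₂ hd
  have hc₀ : (0 : ℝ) < 1 / 2 := by norm_num
  have hc₁ : (1 / 2 : ℝ) ≤ 1 := by norm_num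
  exact ⟨shortcutMetric_nonneg hc₀.le hc₁, fun _ _ => shortcutMetric_eq_zero_iff hc₀ hc₁,
    shortcutMetric_comm hc₀.le, shortcutMetric_triangle hc₀.le hc₁,
    fun x y => ⟨mul_dist_le_shortcutMetric hc₀.le hc₁ x y, shortcutMetric_le_dist x y⟩⟩
end

section
/- (Open maps that are almost injective are injective.) Let X be a Hausdorff topological space, let Y be a topological space equipped with a Borel measure ν such that ν(V) > 0 for every nonempty open set V ⊆ Y, and let f : X → Y be an open map (the image of every open set is open). If the set { y ∈ Y : there exist x₁ ≠ x₂ in X with f(x₁) = y and f(x₂) = y } is ν-null, then f is injective. -/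
open MeasureTheory Set Function

theorem image_inter_image_subset_of_disjoint {X Y : Type*} (f : X → Y) {U V : Set X}
    (hUV : Disjoint U V) :
    f '' U ∩ f '' V ⊆ {y : Y | ∃ x₁ x₂ : X, x₁ ≠ x₂ ∧ f x₁ = y ∧ f x₂ = y} := by
  rintro y ⟨⟨a, ha, rfl⟩, b, hb, hba⟩
  exact ⟨a, b, hUV.ne_of_mem ha hb, rfl, hba⟩

theorem IsOpenMap.injective_of_interior_eq_empty {X Y : Type*} [TopologicalSpace X] [T2Space X]
    [TopologicalSpace Y] {f : X → Y} (hf : IsOpenMap f)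
    (h : interior {y : Y | ∃ x₁ x₂ : X, x₁ ≠ x₂ ∧ f x₁ = y ∧ f x₂ = y} = ∅) :
    Injective f := by
  intro a b hab
  by_contra hne
  obtain ⟨U, V, hU, hV, haU, hbV, hUV⟩ := t2_separation hne
  have hopen : IsOpen (f '' U ∩ f '' V) := (hf U hU).inter (hf V hV)
  have hmem : f a ∈ f '' U ∩ f '' V := ⟨mem_image_of_mem f haU, b, hbV, hab.symm⟩
  have hint := interior_maximal (image_inter_image_subset_of_disjoint f hUV) hopen hmem
  rwa [h] at hint

theorem openMap_almost_injective_injective_general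
    (X Y : Type*) [TopologicalSpace X] [T2Space X]
    [TopologicalSpace Y] [MeasurableSpace Y]
    (ν : Measure Y) (hν : ∀ V : Set Y, IsOpen V → V.Nonempty → 0 < ν V)
    (f : X → Y) (hf : IsOpenMap f)
    (hnull : ν {y : Y | ∃ x₁ x₂ : X, x₁ ≠ x₂ ∧ f x₁ = y ∧ f x₂ = y} = 0) :
    Function.Injective f := by
  have : ν.IsOpenPosMeasure := ⟨fun V hV hne => (hν V hV hne).ne'⟩
  exact hf.injective_of_interior_eq_empty (Measure.interior_eq_empty_of_null hnull)

/-- Open maps that are almost injective are injective: if `X` is Hausdorff, `ν` is a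
Borel measure on `Y` that is positive on nonempty open sets, `f : X → Y` is an open
map, and the set of values attained more than once is `ν`-null, then `f` is
injective. -/
theorem openMap_almost_injective_injective
    (X Y : Type*) [TopologicalSpace X] [T2Space X]
    [TopologicalSpace Y] [MeasurableSpace Y] [BorelSpace Y]
    (ν : Measure Y) (hν : ∀ V : Set Y, IsOpen V → V.Nonempty → 0 < ν V)
    (f : X → Y) (hf : IsOpenMap f)
    (hnull : ν {y : Y | ∃ x₁ x₂ : X, x₁ ≠ x₂ ∧ f x₁ = y ∧ f x₂ = y} = 0) :
    Function.Injective f :=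
  openMap_almost_injective_injective_general X Y ν hν f hf hnull
end

section
/- (Local-to-global step of the main rigidity theorem.) Let (M, d) be a metric space equipped with a Borel measure ν which is an essential length space, let (X, d_X) be a metric space, and let f : X → M be a bijective 1-Lipschitz map with inverse g : M → X. Suppose there is a ν-null set N ⊆ M such that for every Lipschitz curve γ : [0,1] → M with γ^{-1}(N) of one-dimensional Lebesgue measure zero, the length of g ∘ γ satisfies L(g ∘ γ) ≤ L(γ). Then f is an isometry: d_X(a,b) = d(f(a), f(b)) for all a, b ∈ X. -/
open MeasureTheory Set

lemma dist_le_of_forall_eVariationOn_le {X : Type*} [PseudoMetricSpace X] {a b : X} {r : ℝ}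
    (hr : 0 ≤ r)
    (h : ∀ ε > 0, ∃ φ : ℝ → X, φ 0 = a ∧ φ 1 = b ∧
      eVariationOn φ (Icc 0 1) ≤ ENNReal.ofReal (r + ε)) :
    dist a b ≤ r := by
  refine le_of_forall_pos_le_add fun ε hε => ?_
  obtain ⟨φ, h0, h1, hvar⟩ := h ε hε
  have hedist : edist a b ≤ ENNReal.ofReal (r + ε) := by
    calc edist a b = edist (φ 0) (φ 1) := by rw [h0, h1]
      _ ≤ eVariationOn φ (Icc 0 1) :=
        eVariationOn.edist_le φ (left_mem_Icc.2 zero_le_one) (right_mem_Icc.2 zero_le_one)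
      _ ≤ ENNReal.ofReal (r + ε) := hvar
  rwa [edist_dist, ENNReal.ofReal_le_ofReal_iff (by positivity)] at hedist

theorem local_to_global_isometry_general
    (M : Type*) [MetricSpace M] [MeasurableSpace M] (ν : Measure M)
    (X : Type*) [MetricSpace X]
    (hess : ∀ (x y : M) (N : Set M), ν N = 0 → ∀ ε : ℝ, 0 < ε →
      ∃ γ : ℝ → M, (∃ K : NNReal, LipschitzOnWith K γ (Icc 0 1)) ∧
        γ 0 = x ∧ γ 1 = y ∧
        volume (γ ⁻¹' N ∩ Icc 0 1) = 0 ∧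
        eVariationOn γ (Icc 0 1) ≤ ENNReal.ofReal (dist x y + ε))
    (f : X → M) (g : M → X)
    (hfg : Function.LeftInverse g f)
    (hlip : LipschitzWith 1 f)
    (N : Set M) (hN : ν N = 0)
    (hcurve : ∀ γ : ℝ → M, (∃ K : NNReal, LipschitzOnWith K γ (Icc 0 1)) →
      volume (γ ⁻¹' N ∩ Icc 0 1) = 0 →
      eVariationOn (g ∘ γ) (Icc 0 1) ≤ eVariationOn γ (Icc 0 1)) :
    ∀ a b : X, dist a b = dist (f a) (f b) := by
  intro a b
  refine le_antisymm ?_ (by simpa using hlip.dist_le_mul a b)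
  refine dist_le_of_forall_eVariationOn_le dist_nonneg fun ε hε => ?_
  obtain ⟨γ, hγlip, h0, h1, hγN, hγvar⟩ := hess (f a) (f b) N hN ε hε
  exact ⟨g ∘ γ, by simp [h0, hfg a], by simp [h1, hfg b], (hcurve γ hγlip hγN).trans hγvar⟩

/-- Local-to-global step of the main rigidity theorem: let `(M, d, ν)` be an
essential length space, `f : X → M` a bijective 1-Lipschitz map with inverse `g`.
If there is a `ν`-null set `N` such that `g` does not increase the length of any
Lipschitz curve spending zero time in `N`, then `f` is an isometry. -/
theorem local_to_global_isometry
    (M : Type*) [MetricSpace M] [MeasurableSpace M] (ν : Measure M)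
    (X : Type*) [MetricSpace X]
    (hess : ∀ (x y : M) (N : Set M), ν N = 0 → ∀ ε : ℝ, 0 < ε →
      ∃ γ : ℝ → M, (∃ K : NNReal, LipschitzOnWith K γ (Icc 0 1)) ∧
        γ 0 = x ∧ γ 1 = y ∧
        volume (γ ⁻¹' N ∩ Icc 0 1) = 0 ∧
        eVariationOn γ (Icc 0 1) ≤ ENNReal.ofReal (dist x y + ε))
    (f : X → M) (g : M → X)
    (hf : Function.Bijective f) (hfg : Function.LeftInverse g f)
    (hlip : LipschitzWith 1 f)
    (N : Set M) (hN : ν N = 0)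
    (hcurve : ∀ γ : ℝ → M, (∃ K : NNReal, LipschitzOnWith K γ (Icc 0 1)) →
      volume (γ ⁻¹' N ∩ Icc 0 1) = 0 →
      eVariationOn (g ∘ γ) (Icc 0 1) ≤ eVariationOn γ (Icc 0 1)) :
    ∀ a b : X, dist a b = dist (f a) (f b) :=
  local_to_global_isometry_general M ν X hess f g hfg hlip N hN hcurve
end
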